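/- arXiv:2410.05540 — 6 statements merged into one kernel-verified Lean document; each statement's English description precedes it below -/
import Mathlib

section
/- Let κ be a Borel probability measure on ℝ and let ν be the pushforward of κ under the diagonal map d : ℝ → (Fin (N−1) → ℝ), d(t) = (t, t, …, t). Then PA_N(ν) = PA_2(κ), and if PA_2(κ) > 0 then also MSE_N(ν) = MSE_2(κ). -/
open MeasureTheory ProbabilityTheory

noncomputable section

def midN (N : ℕ) (p : ℝ × (Fin (N-1) → ℝ)) : ℝ :=
  (max p.1 (⨆ i, p.2 i) + min p.1 (⨅ i, p.2 i)) / 2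

def accN (N : ℕ) (η Δ : ℝ) : Set (ℝ × (Fin (N-1) → ℝ)) :=
  {p | max p.1 (⨆ i, p.2 i) - min p.1 (⨅ i, p.2 i) ≤ η * Δ}

def PA_N (N : ℕ) (η Δ : ℝ) (μ : Measure ℝ) (ν : Measure (Fin (N-1) → ℝ)) : ℝ :=
  ((μ.prod ν) (accN N η Δ)).toReal

def MSE_N (N : ℕ) (η Δ : ℝ) (μ : Measure ℝ) (ν : Measure (Fin (N-1) → ℝ)) : ℝ :=
  ∫ p, (midN N p) ^ 2 ∂((μ.prod ν)[|accN N η Δ])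

def mid2 (p : ℝ × ℝ) : ℝ := (max p.1 p.2 + min p.1 p.2) / 2

def acc2 (η Δ : ℝ) : Set (ℝ × ℝ) := {p | max p.1 p.2 - min p.1 p.2 ≤ η * Δ}

def PA_2 (η Δ : ℝ) (μ κ : Measure ℝ) : ℝ := ((μ.prod κ) (acc2 η Δ)).toReal

def MSE_2 (η Δ : ℝ) (μ κ : Measure ℝ) : ℝ :=
  ∫ p, (mid2 p) ^ 2 ∂((μ.prod κ)[|acc2 η Δ])

def cN (N : ℕ) (η Δ : ℝ) (μ : Measure ℝ) (α : ℝ) : ℝ :=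
  sSup {r | ∃ ν : Measure (Fin (N-1) → ℝ), IsProbabilityMeasure ν ∧
    α ≤ PA_N N η Δ μ ν ∧ r = MSE_N N η Δ μ ν}

def c2 (η Δ : ℝ) (μ : Measure ℝ) (α : ℝ) : ℝ :=
  sSup {r | ∃ κ : Measure ℝ, IsProbabilityMeasure κ ∧
    α ≤ PA_2 η Δ μ κ ∧ r = MSE_2 η Δ μ κ}

def IsBestResponseN (N : ℕ) (η Δ : ℝ) (μ : Measure ℝ) (QAD : ℝ → ℝ → ℝ)
    (ν : Measure (Fin (N-1) → ℝ)) : Prop :=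
  IsProbabilityMeasure ν ∧ 0 < PA_N N η Δ μ ν ∧
    ∀ ν' : Measure (Fin (N-1) → ℝ), IsProbabilityMeasure ν' → 0 < PA_N N η Δ μ ν' →
      QAD (MSE_N N η Δ μ ν') (PA_N N η Δ μ ν') ≤ QAD (MSE_N N η Δ μ ν) (PA_N N η Δ μ ν)

def IsBestResponse2 (η Δ : ℝ) (μ : Measure ℝ) (QAD : ℝ → ℝ → ℝ) (κ : Measure ℝ) : Prop :=
  IsProbabilityMeasure κ ∧ 0 < PA_2 η Δ μ κ ∧
    ∀ κ' : Measure ℝ, IsProbabilityMeasure κ' → 0 < PA_2 η Δ μ κ' →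
      QAD (MSE_2 η Δ μ κ') (PA_2 η Δ μ κ') ≤ QAD (MSE_2 η Δ μ κ) (PA_2 η Δ μ κ)

theorem stmt0 {N : ℕ} (hN : 2 ≤ N) {η Δ : ℝ} (hΔ : 0 < Δ) (hη : 2 ≤ η)
    (μ : Measure ℝ) [IsProbabilityMeasure μ] (hμ : μ (Set.Icc (-Δ) Δ) = 1)
    (κ : Measure ℝ) [IsProbabilityMeasure κ]
    (ν : Measure (Fin (N-1) → ℝ)) (hν : ν = κ.map (fun t => fun _ => t)) :
    PA_N N η Δ μ ν = PA_2 η Δ μ κ ∧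
      (0 < PA_2 η Δ μ κ → MSE_N N η Δ μ ν = MSE_2 η Δ μ κ) := by
  have hN1 : 0 < N - 1 := by omega
  haveI : Nonempty (Fin (N-1)) := ⟨⟨0, hN1⟩⟩
  set f : ℝ × ℝ → ℝ × (Fin (N-1) → ℝ) := fun p => (p.1, fun _ => p.2) with hfdef
  have hfm : Measurable f :=
    measurable_fst.prodMk (measurable_pi_lambda _ fun _ => measurable_snd)
  have hcomp : ∀ p : ℝ × ℝ, midN N (f p) = mid2 p := by
    intro p; simp [midN, mid2, f, ciSup_const, ciInf_const]
  have hpre : f ⁻¹' accN N η Δ = acc2 η Δ := by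
    ext p; simp [accN, acc2, f, ciSup_const, ciInf_const]
  have hmid : Measurable (midN N) := by
    apply Measurable.div _ measurable_const
    apply Measurable.add
    · exact (measurable_fst.max (Measurable.iSup fun i =>
        (measurable_pi_apply i).comp measurable_snd))
    · exact (measurable_fst.min (Measurable.iInf fun i =>
        (measurable_pi_apply i).comp measurable_snd))
  have haccN : MeasurableSet (accN N η Δ) := by
    have h1 : Measurable fun p : ℝ × (Fin (N-1) → ℝ) =>
        max p.1 (⨆ i, p.2 i) - min p.1 (⨅ i, p.2 i) := by
      apply Measurable.sub
      · exact (measurable_fst.max (Measurable.iSup fun i =>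
          (measurable_pi_apply i).comp measurable_snd))
      · exact (measurable_fst.min (Measurable.iInf fun i =>
          (measurable_pi_apply i).comp measurable_snd))
    exact measurableSet_le h1 measurable_const
  have hprod : μ.prod ν = (μ.prod κ).map f := by
    rw [hν]
    have h := Measure.map_prod_map (f := (id : ℝ → ℝ))
      (g := fun t : ℝ => fun _ : Fin (N-1) => t) μ κ measurable_id
      (measurable_pi_lambda _ fun _ => measurable_id)
    rw [Measure.map_id] at h
    rw [h]
    rfl
  have hPA : PA_N N η Δ μ ν = PA_2 η Δ μ κ := by
    rw [PA_N, PA_2, hprod, Measure.map_apply hfm haccN, hpre]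
  refine ⟨hPA, fun _ => ?_⟩
  have hcond : (μ.prod ν)[|accN N η Δ] = ((μ.prod κ)[|acc2 η Δ]).map f := by
    rw [hprod, ProbabilityTheory.cond, ProbabilityTheory.cond,
      Measure.map_apply hfm haccN, hpre, Measure.restrict_map hfm haccN, hpre,
      Measure.map_smul]
  rw [MSE_N, MSE_2, hcond,
    integral_map hfm.aemeasurable ((hmid.pow_const 2).aestronglyMeasurable)]
  exact integral_congr_ae (Filter.Eventually.of_forall fun p => by simp only []; rw [hcomp p])
end
end

section
/- For every 0 < α ≤ 1, c_η^N(α) ≥ c_η^2(α). -/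
open MeasureTheory ProbabilityTheory

noncomputable section

/-!
A two-node adversary reporting `t` is simulated by `N - 1` colluding nodes that all report `t`:
the acceptance event and the midpoint estimate are unchanged, so every pair (acceptance
probability, MSE) achievable with two nodes is achievable with `N`. Comparing the suprema then
only needs the `N`-node MSE to be bounded, which holds because the honest report lies in
`[-Δ, Δ]` and an accepted midpoint is within `ηΔ/2` of it.
-/

open Set

lemma ProbabilityTheory.cond_map {Ω Ω' : Type*} [MeasurableSpace Ω] [MeasurableSpace Ω']
    {μ : Measure Ω} {f : Ω → Ω'} (hf : Measurable f) {s : Set Ω'} (hs : MeasurableSet s) :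
    (μ.map f)[|s] = (μ[|f ⁻¹' s]).map f := by
  rw [cond, cond, Measure.map_apply hf hs, Measure.restrict_map hf hs, Measure.map_smul]

lemma MeasureTheory.integral_le_of_ae_abs_le {α : Type*} [MeasurableSpace α] {μ : Measure α}
    [IsZeroOrProbabilityMeasure μ] {f : α → ℝ} {C : ℝ} (hC : 0 ≤ C)
    (h : ∀ᵐ x ∂μ, |f x| ≤ C) : ∫ x, f x ∂μ ≤ C :=
  calc ∫ x, f x ∂μ ≤ ‖∫ x, f x ∂μ‖ := le_abs_self _
    _ ≤ C * μ.real univ := norm_integral_le_of_norm_le_const h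
    _ ≤ C := mul_le_of_le_one_right hC measureReal_le_one

lemma measurable_function_const {ι α : Type*} [MeasurableSpace α] :
    Measurable (Function.const ι : α → ι → α) :=
  measurable_pi_lambda _ fun _ ↦ measurable_id

section NodeStrategies

variable {N : ℕ} {η Δ : ℝ}

lemma measurable_iSup_snd :
    Measurable fun p : ℝ × (Fin (N - 1) → ℝ) ↦ ⨆ i, p.2 i :=
  Measurable.iSup fun i ↦ (measurable_pi_apply i).comp measurable_snd

lemma measurable_iInf_snd :
    Measurable fun p : ℝ × (Fin (N - 1) → ℝ) ↦ ⨅ i, p.2 i :=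
  Measurable.iInf fun i ↦ (measurable_pi_apply i).comp measurable_snd

lemma measurable_midN : Measurable (midN N) :=
  ((measurable_fst.max measurable_iSup_snd).add (measurable_fst.min measurable_iInf_snd)).div_const 2

lemma measurableSet_accN : MeasurableSet (accN N η Δ) :=
  measurableSet_le ((measurable_fst.max measurable_iSup_snd).sub
    (measurable_fst.min measurable_iInf_snd)) measurable_const

lemma abs_midN_sub_fst_le {p : ℝ × (Fin (N - 1) → ℝ)} (hp : p ∈ accN N η Δ) :
    |midN N p - p.1| ≤ η * Δ / 2 := by
  have hmin := min_le_left p.1 (⨅ i, p.2 i)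
  have hmax := le_max_left p.1 (⨆ i, p.2 i)
  have hwidth : max p.1 (⨆ i, p.2 i) - min p.1 (⨅ i, p.2 i) ≤ η * Δ := hp
  rw [abs_le, midN]
  constructor <;> linarith

lemma MSE_N_nonneg (μ : Measure ℝ) (ν : Measure (Fin (N - 1) → ℝ)) :
    0 ≤ MSE_N N η Δ μ ν :=
  integral_nonneg fun _ ↦ sq_nonneg _

lemma MSE_N_le (μ : Measure ℝ) [IsProbabilityMeasure μ] (hμ : μ (Icc (-Δ) Δ) = 1)
    (ν : Measure (Fin (N - 1) → ℝ)) [SFinite ν] :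
    MSE_N N η Δ μ ν ≤ (Δ + η * Δ / 2) ^ 2 := by
  have honest : ∀ᵐ p ∂(μ.prod ν)[|accN N η Δ], p.1 ∈ Icc (-Δ) Δ :=
    cond_absolutelyContinuous.ae_le <| Measure.quasiMeasurePreserving_fst.ae <|
      (mem_ae_iff_prob_eq_one measurableSet_Icc).2 hμ
  refine integral_le_of_ae_abs_le (sq_nonneg _) ?_
  filter_upwards [honest, ae_cond_mem measurableSet_accN] with p hp₁ hp
  have hmid : |midN N p| ≤ Δ + η * Δ / 2 := by
    linarith [abs_sub_abs_le_abs_sub (midN N p) p.1, abs_midN_sub_fst_le hp, abs_le.2 hp₁]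
  rw [abs_sq, ← sq_abs]
  exact pow_le_pow_left₀ (abs_nonneg _) hmid 2

def diagStrategy (N : ℕ) (κ : Measure ℝ) : Measure (Fin (N - 1) → ℝ) :=
  κ.map (Function.const _)

instance (κ : Measure ℝ) [IsProbabilityMeasure κ] : IsProbabilityMeasure (diagStrategy N κ) :=
  Measure.isProbabilityMeasure_map measurable_function_const.aemeasurable

lemma prod_diagStrategy (μ κ : Measure ℝ) [SFinite μ] [SFinite κ] :
    μ.prod (diagStrategy N κ) = (μ.prod κ).map (Prod.map id (Function.const _)) := by
  rw [diagStrategy, ← Measure.map_prod_map μ κ measurable_id measurable_function_const,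
    Measure.map_id]

variable [Nonempty (Fin (N - 1))]

lemma midN_prodMap_const (p : ℝ × ℝ) :
    midN N (Prod.map id (Function.const _) p) = mid2 p := by
  simp [midN, mid2, ciSup_const, ciInf_const]

lemma prodMap_const_preimage_accN :
    Prod.map id (Function.const (Fin (N - 1))) ⁻¹' accN N η Δ = acc2 η Δ := by
  ext p
  simp [accN, acc2, ciSup_const, ciInf_const]

lemma PA_N_diagStrategy (μ κ : Measure ℝ) [SFinite μ] [SFinite κ] :
    PA_N N η Δ μ (diagStrategy N κ) = PA_2 η Δ μ κ := by
  rw [PA_N, PA_2, prod_diagStrategy,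
    Measure.map_apply (measurable_id.prodMap measurable_function_const) measurableSet_accN,
    prodMap_const_preimage_accN]

lemma MSE_N_diagStrategy (μ κ : Measure ℝ) [SFinite μ] [SFinite κ] :
    MSE_N N η Δ μ (diagStrategy N κ) = MSE_2 η Δ μ κ := by
  have hT : Measurable (Prod.map id (Function.const (Fin (N - 1))) : ℝ × ℝ → _) :=
    measurable_id.prodMap measurable_function_const
  rw [MSE_N, MSE_2, prod_diagStrategy, cond_map hT measurableSet_accN,
    prodMap_const_preimage_accN,
    integral_map hT.aemeasurable (measurable_midN.pow_const 2).aestronglyMeasurable]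
  simp only [midN_prodMap_const]

end NodeStrategies

theorem stmt1_general {N : ℕ} (hN : 2 ≤ N) {η Δ : ℝ}
    (μ : Measure ℝ) [IsProbabilityMeasure μ] (hμ : μ (Set.Icc (-Δ) Δ) = 1) :
    ∀ α : ℝ, 0 < α → α ≤ 1 → c2 η Δ μ α ≤ cN N η Δ μ α := by
  intro α _ _
  have : Nonempty (Fin (N - 1)) := ⟨⟨0, by omega⟩⟩
  have hbdd : BddAbove {r | ∃ ν : Measure (Fin (N-1) → ℝ), IsProbabilityMeasure ν ∧
      α ≤ PA_N N η Δ μ ν ∧ r = MSE_N N η Δ μ ν} :=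
    ⟨_, by rintro _ ⟨ν, hν, -, rfl⟩; exact MSE_N_le μ hμ ν⟩
  refine Real.sSup_le ?_ (Real.sSup_nonneg ?_)
  · rintro _ ⟨κ, hκ, hα, rfl⟩
    refine le_csSup hbdd ⟨diagStrategy N κ, inferInstance, ?_, ?_⟩
    · rwa [PA_N_diagStrategy]
    · rw [MSE_N_diagStrategy]
  · rintro _ ⟨ν, -, -, rfl⟩
    exact MSE_N_nonneg μ ν

theorem stmt1 {N : ℕ} (hN : 2 ≤ N) {η Δ : ℝ} (hΔ : 0 < Δ) (hη : 2 ≤ η)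
    (μ : Measure ℝ) [IsProbabilityMeasure μ] (hμ : μ (Set.Icc (-Δ) Δ) = 1) :
    ∀ α : ℝ, 0 < α → α ≤ 1 → c2 η Δ μ α ≤ cN N η Δ μ α :=
  stmt1_general hN μ hμ
end
end

section
/- Let D = { x : Fin (N−1) → ℝ | ∀ i j, |x_i − x_j| ≤ ηΔ }. If ν is an N-node adversarial strategy with PA_N(ν) > 0, then ν(D) ≥ PA_N(ν) > 0, and the conditioned measure ν′ = ν(· ∩ D)/ν(D) satisfies PA_N(ν′) = PA_N(ν)/ν(D) ≥ PA_N(ν) and MSE_N(ν′) = MSE_N(ν). -/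
open MeasureTheory ProbabilityTheory

noncomputable section

/-! On the acceptance event all adversarial values lie in an interval of length `ηΔ`, so
`A ⊆ ℝ × D`. Conditioning `ν` on `D` is conditioning `μ ⊗ ν` on `ℝ × D`, which scales the
measure of `A` by `ν(D)⁻¹` and, since `A ⊆ ℝ × D`, leaves the law conditioned on `A` unchanged. -/

open Set

namespace MeasureTheory.Measure

variable {α β : Type*} [MeasurableSpace α] [MeasurableSpace β]

lemma prod_cond_right (μ : Measure α) [IsProbabilityMeasure μ] (ν : Measure β) [SFinite ν]
    (s : Set β) : μ.prod (ν[|s]) = (μ.prod ν)[|univ ×ˢ s] := by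
  rw [ProbabilityTheory.cond, ProbabilityTheory.cond, prod_smul_right, ← prod_restrict,
    restrict_univ, prod_prod, measure_univ, one_mul]

end MeasureTheory.Measure

namespace ProbabilityTheory

variable {Ω : Type*} [MeasurableSpace Ω] {ρ : Measure Ω} {s t : Set Ω}

lemma cond_cond_eq_cond_of_subset (hs : MeasurableSet s) (hs_top : ρ s ≠ ⊤) (hts : t ⊆ s) :
    ρ[|s][|t] = ρ[|t] := by
  ext u hu
  have hst : s ∩ t = t := inter_eq_right.2 hts
  obtain ht | ht := eq_or_ne (ρ t) 0
  · have : ρ (t ∩ u) = 0 := measure_mono_null inter_subset_left ht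
    simp [cond_apply hs, cond_apply' hu, hst, ht, this, ← inter_assoc]
  · have hs0 : ρ s ≠ 0 := (measure_pos_of_superset hts ht).ne'
    simp [*, cond_apply hs, cond_apply' hu, ← inter_assoc, ENNReal.mul_inv, ← mul_assoc,
      mul_comm _ (ρ s)⁻¹, ENNReal.inv_mul_cancel]

end ProbabilityTheory

lemma measurableSet_setOf_forall_abs_sub_le {ι : Type*} [Countable ι] (r : ℝ) :
    MeasurableSet {x : ι → ℝ | ∀ i j, |x i - x j| ≤ r} := by
  simp only [ofPred_forall]
  exact .iInter fun i ↦ .iInter fun j ↦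
    measurableSet_le ((measurable_pi_apply i).sub (measurable_pi_apply j)).abs measurable_const

lemma mem_Icc_min_ciInf_max_ciSup {ι : Type*} [Finite ι] (a : ℝ) (x : ι → ℝ) (k : ι) :
    x k ∈ Icc (min a (⨅ i, x i)) (max a (⨆ i, x i)) :=
  ⟨(min_le_right _ _).trans (ciInf_le (finite_range _).bddBelow k),
    (le_ciSup (finite_range _).bddAbove k).trans (le_max_right _ _)⟩

lemma abs_sub_le_of_mem_accN {N : ℕ} {η Δ : ℝ} {p : ℝ × (Fin (N-1) → ℝ)}
    (hp : p ∈ accN N η Δ) (i j : Fin (N-1)) : |p.2 i - p.2 j| ≤ η * Δ := by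
  have hi := mem_Icc_min_ciInf_max_ciSup p.1 p.2 i
  have hj := mem_Icc_min_ciInf_max_ciSup p.1 p.2 j
  have hp' : max p.1 (⨆ i, p.2 i) - min p.1 (⨅ i, p.2 i) ≤ η * Δ := hp
  rw [abs_sub_le_iff]
  constructor <;> linarith [hi.1, hi.2, hj.1, hj.2]

theorem stmt2_general {N : ℕ} {η Δ : ℝ}
    (μ : Measure ℝ) [IsProbabilityMeasure μ]
    (ν : Measure (Fin (N-1) → ℝ)) [IsProbabilityMeasure ν]
    (hpa : 0 < PA_N N η Δ μ ν)
    (D : Set (Fin (N-1) → ℝ)) (hD : D = {x | ∀ i j, |x i - x j| ≤ η * Δ}) :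
    PA_N N η Δ μ ν ≤ (ν D).toReal ∧ 0 < (ν D).toReal ∧
      PA_N N η Δ μ (ν[|D]) = PA_N N η Δ μ ν / (ν D).toReal ∧
      PA_N N η Δ μ ν ≤ PA_N N η Δ μ (ν[|D]) ∧
      MSE_N N η Δ μ (ν[|D]) = MSE_N N η Δ μ ν := by
  have hDm : MeasurableSet ((univ : Set ℝ) ×ˢ D) :=
    MeasurableSet.univ.prod (hD ▸ measurableSet_setOf_forall_abs_sub_le _)
  have hsub : accN N η Δ ⊆ univ ×ˢ D := fun p hp ↦ ⟨trivial, hD ▸ abs_sub_le_of_mem_accN hp⟩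
  have hprodD : (μ.prod ν) (univ ×ˢ D) = ν D := by rw [Measure.prod_prod, measure_univ, one_mul]
  have hle : PA_N N η Δ μ ν ≤ (ν D).toReal :=
    ENNReal.toReal_mono (measure_ne_top _ _) (hprodD ▸ measure_mono hsub)
  have hpos : 0 < (ν D).toReal := hpa.trans_le hle
  have hPA : PA_N N η Δ μ (ν[|D]) = PA_N N η Δ μ ν / (ν D).toReal := by
    rw [PA_N, Measure.prod_cond_right, cond_apply hDm, inter_eq_right.2 hsub, hprodD,
      ENNReal.toReal_mul, ENNReal.toReal_inv, PA_N, div_eq_inv_mul]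
  refine ⟨hle, hpos, hPA, ?_, ?_⟩
  · rw [hPA]
    exact le_div_self hpa.le hpos (ENNReal.toReal_le_of_le_ofReal zero_le_one
      (by simpa using prob_le_one))
  · rw [MSE_N, MSE_N, Measure.prod_cond_right,
      cond_cond_eq_cond_of_subset hDm (measure_ne_top _ _) hsub]

theorem stmt2 {N : ℕ} (hN : 2 ≤ N) {η Δ : ℝ} (hΔ : 0 < Δ) (hη : 2 ≤ η)
    (μ : Measure ℝ) [IsProbabilityMeasure μ] (hμ : μ (Set.Icc (-Δ) Δ) = 1)
    (ν : Measure (Fin (N-1) → ℝ)) [IsProbabilityMeasure ν]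
    (hpa : 0 < PA_N N η Δ μ ν)
    (D : Set (Fin (N-1) → ℝ)) (hD : D = {x | ∀ i j, |x i - x j| ≤ η * Δ}) :
    PA_N N η Δ μ ν ≤ (ν D).toReal ∧ 0 < (ν D).toReal ∧
      PA_N N η Δ μ (ν[|D]) = PA_N N η Δ μ ν / (ν D).toReal ∧
      PA_N N η Δ μ ν ≤ PA_N N η Δ μ (ν[|D]) ∧
      MSE_N N η Δ μ (ν[|D]) = MSE_N N η Δ μ ν :=
  stmt2_general μ ν hpa D hD
end
end

section
/- Let Δ > 0, η ≥ 2, N ≥ 2, let n_h ∈ [−Δ, Δ], and let x : Fin (N−1) → ℝ satisfy |x_i − x_j| ≤ ηΔ for all i, j. Let s be an entry of x (s = x_k for some k) such that |x_i| ≤ |s| for all i. Then max(n_h, max_i x_i) − min(n_h, min_i x_i) ≤ ηΔ if and only if |n_h − s| ≤ ηΔ. -/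
open MeasureTheory ProbabilityTheory

noncomputable section

theorem stmt3 {N : ℕ} (hN : 2 ≤ N) {η Δ : ℝ} (hΔ : 0 < Δ) (hη : 2 ≤ η)
    (nh : ℝ) (hnh : nh ∈ Set.Icc (-Δ) Δ)
    (x : Fin (N-1) → ℝ) (hx : ∀ i j, |x i - x j| ≤ η * Δ)
    (s : ℝ) (k : Fin (N-1)) (hs : s = x k) (hmax : ∀ i, |x i| ≤ |s|) :
    max nh (⨆ i, x i) - min nh (⨅ i, x i) ≤ η * Δ ↔ |nh - s| ≤ η * Δ := by
  have hNe : Nonempty (Fin (N-1)) := ⟨⟨0, by omega⟩⟩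
  have hbddA : BddAbove (Set.range x) := (Set.finite_range x).bddAbove
  have hbddB : BddBelow (Set.range x) := (Set.finite_range x).bddBelow
  obtain ⟨hnh1, hnh2⟩ := hnh
  constructor
  · intro h
    have h1 : s ≤ ⨆ i, x i := hs ▸ le_ciSup hbddA k
    have h2 : ⨅ i, x i ≤ s := hs ▸ ciInf_le hbddB k
    have h3 : nh ≤ max nh (⨆ i, x i) := le_max_left _ _
    have h4 : min nh (⨅ i, x i) ≤ nh := min_le_left _ _
    have h5 : s ≤ max nh (⨆ i, x i) := h1.trans (le_max_right _ _)
    have h6 : min nh (⨅ i, x i) ≤ s := (min_le_right _ _).trans h2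
    rw [abs_sub_le_iff]
    constructor <;> linarith
  · intro h
    rw [abs_sub_le_iff] at h
    obtain ⟨hns, hsn⟩ := h
    -- pointwise bounds
    have hA : ∀ i, x i ≤ nh + η * Δ := by
      intro i
      have hik := abs_le.mp (hx i k)
      have hxi1 : x i ≤ |s| := (le_abs_self _).trans (hmax i)
      rcases le_total nh s with hc | hc
      · rcases abs_cases s with ⟨he, _⟩ | ⟨he, _⟩ <;> rw [he] at hxi1 <;> nlinarith
      · rw [← hs] at hik; linarith [hik.2]
    have hB : ∀ j, nh - η * Δ ≤ x j := by
      intro j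
      have hjk := abs_le.mp (hx j k)
      have hxj1 : -|s| ≤ x j := by
        have := neg_abs_le (x j); have := hmax j; linarith
      rcases le_total s nh with hc | hc
      · rcases abs_cases s with ⟨he, _⟩ | ⟨he, _⟩ <;> rw [he] at hxj1 <;> nlinarith
      · rw [← hs] at hjk; linarith [hjk.1]
    have hsup : (⨆ i, x i) ≤ nh + η * Δ := ciSup_le hA
    have hinf : nh - η * Δ ≤ ⨅ i, x i := le_ciInf hB
    have hsupinf : (⨆ i, x i) ≤ (⨅ i, x i) + η * Δ := by
      apply ciSup_le
      intro i
      have : x i - η * Δ ≤ ⨅ j, x j := le_ciInf fun j => by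
        have := abs_le.mp (hx i j); linarith [this.1, this.2]
      linarith
    rcases max_cases nh (⨆ i, x i) with ⟨hm, _⟩ | ⟨hm, _⟩ <;>
      rcases min_cases nh (⨅ i, x i) with ⟨hm2, _⟩ | ⟨hm2, _⟩ <;>
      rw [hm, hm2] <;> nlinarith
end
end

section
/- Let Δ > 0, η ≥ 2, N ≥ 2, let n_h ∈ [−Δ, Δ], and let x : Fin (N−1) → ℝ satisfy |x_i − x_j| ≤ ηΔ for all i, j. Let s be an entry of x (s = x_k for some k) such that |x_i| ≤ |s| for all i. Then |max(n_h, max_i x_i) + min(n_h, min_i x_i)| ≤ |n_h + s|. -/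
open MeasureTheory ProbabilityTheory

noncomputable section

theorem stmt4 {N : ℕ} (hN : 2 ≤ N) {η Δ : ℝ} (hΔ : 0 < Δ) (hη : 2 ≤ η)
    (nh : ℝ) (hnh : nh ∈ Set.Icc (-Δ) Δ)
    (x : Fin (N-1) → ℝ) (hx : ∀ i j, |x i - x j| ≤ η * Δ)
    (s : ℝ) (k : Fin (N-1)) (hs : s = x k) (hmax : ∀ i, |x i| ≤ |s|) :
    |max nh (⨆ i, x i) + min nh (⨅ i, x i)| ≤ |nh + s| := by
  have hne : Nonempty (Fin (N-1)) := ⟨⟨0, by omega⟩⟩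
  have hbdd : BddAbove (Set.range x) := (Set.finite_range x).bddAbove
  have hbdd' : BddBelow (Set.range x) := (Set.finite_range x).bddBelow
  have hM1 : s ≤ ⨆ i, x i := hs ▸ le_ciSup hbdd k
  have hm1 : (⨅ i, x i) ≤ s := hs ▸ ciInf_le hbdd' k
  have hM2 : (⨆ i, x i) ≤ |s| := ciSup_le fun i => (abs_le.1 (hmax i)).2
  have hm2 : -|s| ≤ ⨅ i, x i := le_ciInf fun i => (abs_le.1 (hmax i)).1
  set M := ⨆ i, x i
  set m := ⨅ i, x i
  rcases abs_cases s with ⟨e, hs0⟩ | ⟨e, hs0⟩ <;>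
  rcases max_cases nh M with ⟨hA, hA'⟩ | ⟨hA, hA'⟩ <;>
  rcases min_cases nh m with ⟨hB, hB'⟩ | ⟨hB, hB'⟩ <;>
  rw [hA, hB, abs_le] <;>
  rcases abs_cases (nh + s) with ⟨e2, _⟩ | ⟨e2, _⟩ <;>
  constructor <;> linarith
end
end

section
/- For every N ≥ 2 and every 0 < α ≤ 1, c_η^N(α) = c_η^2(α): the worst-case conditional mean squared error achievable by N−1 adversarial nodes subject to acceptance probability at least α equals that achievable by a single adversarial node. -/
open MeasureTheory ProbabilityTheory

noncomputable section

/-!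
Only the extremes `S = ⨆ i, xᵢ` and `I = ⨅ i, xᵢ` of the adversarial reports matter, and for honest
values `n ∈ [-Δ, Δ]` they can be replaced by one report `T`: when some honest value accepts
`(S, I)`, `T` is the extreme on the side of `S + I` (`S` if `S + I ≥ 0`, else `I`); otherwise `T`
is out of reach of every honest value. Since `η ≥ 2`, `n` accepts `T` exactly when it accepts
`(S, I)`, and on acceptance the midrange of `n, T` is at least as far from `0` as that of `n, S, I`.
Pushing an `N`-node strategy forward along `x ↦ T` thus gives a 2-node strategy with the same
acceptance probability and no smaller conditional MSE. Conversely, a 2-node strategy becomes an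
`N`-node one by letting all adversarial nodes report the same value. Every value in either
supremum is therefore dominated by one in the other, so the suprema agree.
-/

namespace MidrangeFilter

open Set

section ConditionalPushforward

variable {α β : Type*} [MeasurableSpace α] {m : Measure α} {s : Set α}

lemma cond_congr_ae {s' : Set α} (h : s =ᵐ[m] s') : m[|s] = m[|s'] := by
  rw [ProbabilityTheory.cond, ProbabilityTheory.cond, Measure.restrict_congr_set h, measure_congr h]

variable [MeasurableSpace β] {F : α → β} {t : Set β}

lemma map_cond (hF : Measurable F) (ht : MeasurableSet t) :
    (m.map F)[|t] = (m[|F ⁻¹' t]).map F := by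
  simp only [ProbabilityTheory.cond, Measure.restrict_map hF ht, Measure.map_apply hF ht,
    Measure.map_smul]

lemma integral_cond_le_integral_cond_map (hF : Measurable F) (ht : MeasurableSet t)
    (hst : s =ᵐ[m] F ⁻¹' t) {f : α → ℝ} {g : β → ℝ} (hf : 0 ≤ᵐ[m[|s]] f)
    (hg : Integrable g ((m.map F)[|t])) (hfg : ∀ᵐ x ∂m[|s], f x ≤ g (F x)) :
    ∫ x, f x ∂m[|s] ≤ ∫ y, g y ∂(m.map F)[|t] := by
  rw [map_cond hF ht, ← cond_congr_ae hst] at hg ⊢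
  rw [integral_map hF.aemeasurable hg.aestronglyMeasurable]
  exact integral_mono_of_nonneg hf (hg.comp_measurable hF) hfg

end ConditionalPushforward

lemma max_sub_min_le_iff {a b c d K : ℝ} :
    max a b - min c d ≤ K ↔ a ≤ c + K ∧ a ≤ d + K ∧ b ≤ c + K ∧ b ≤ d + K := by
  rw [sub_le_comm, le_min_iff, sub_le_iff_le_add, sub_le_iff_le_add, max_le_iff, max_le_iff]
  tauto

-- `K` plays the role of `η * Δ`; the fallback `Δ + K + 1` is rejected by every `n ∈ [-Δ, Δ]`.
def collapse (Δ K S I : ℝ) : ℝ :=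
  if S - I ≤ K ∧ S ≤ Δ + K ∧ -(Δ + K) ≤ I then (if 0 ≤ S + I then S else I) else Δ + K + 1

variable {Δ K S I n : ℝ}

lemma max_sub_min_collapse_le_iff (hK : 2 * Δ ≤ K) (hIS : I ≤ S) (hn : n ∈ Icc (-Δ) Δ) :
    max n (collapse Δ K S I) - min n (collapse Δ K S I) ≤ K ↔ max n S - min n I ≤ K := by
  obtain ⟨hn₁, hn₂⟩ := hn
  rw [max_sub_min_le_iff, max_sub_min_le_iff, collapse]
  by_cases hC : S - I ≤ K ∧ S ≤ Δ + K ∧ -(Δ + K) ≤ I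
  · rw [if_pos hC]
    obtain ⟨hC₁, hC₂, hC₃⟩ := hC
    split_ifs <;> constructor <;> rintro ⟨h₁, h₂, h₃, h₄⟩ <;> refine ⟨?_, ?_, ?_, ?_⟩ <;> linarith
  · rw [if_neg hC]
    constructor
    · rintro ⟨-, -, h, -⟩
      linarith
    · rintro ⟨-, h₂, h₃, h₄⟩
      exact absurd ⟨by linarith, by linarith, by linarith⟩ hC

lemma sq_midrange_le_collapse (hIS : I ≤ S) (hn : n ∈ Icc (-Δ) Δ)
    (hacc : max n S - min n I ≤ K) :
    ((max n S + min n I) / 2) ^ 2 ≤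
      ((max n (collapse Δ K S I) + min n (collapse Δ K S I)) / 2) ^ 2 := by
  obtain ⟨hn₁, hn₂⟩ := hn
  obtain ⟨h₁, h₂, h₃, h₄⟩ := max_sub_min_le_iff.1 hacc
  have hC : S - I ≤ K ∧ S ≤ Δ + K ∧ -(Δ + K) ≤ I :=
    ⟨by linarith, by linarith, by linarith⟩
  rw [collapse, if_pos hC, max_add_min]
  split_ifs with hQ
  · rcases le_total n I with hnI | hIn
    · rw [min_eq_left hnI, max_eq_right (hnI.trans hIS), add_comm]
    · rw [min_eq_right hIn]
      have := max_le (by linarith : n ≤ n + S - I) (by linarith : S ≤ n + S - I)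
      exact sq_le_sq' (by linarith [le_max_right n S]) (by linarith)
  · rcases le_total S n with hSn | hnS
    · rw [max_eq_left hSn, min_eq_right (hIS.trans hSn)]
    · rw [max_eq_right hnS, ← neg_sq ((n + I) / 2)]
      have := le_min (by linarith : n + I - S ≤ n) (by linarith : n + I - S ≤ I)
      exact sq_le_sq' (by linarith) (by linarith [min_le_right n I])

lemma sq_midrange_le {lo hi : ℝ} (hlo : lo ≤ n) (hhi : n ≤ hi) (hK : hi - lo ≤ K)
    (hn : n ∈ Icc (-Δ) Δ) : ((hi + lo) / 2) ^ 2 ≤ (Δ + K) ^ 2 := by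
  obtain ⟨hn₁, hn₂⟩ := hn
  exact sq_le_sq' (by linarith) (by linarith)

lemma measurable_collapse : Measurable fun p : ℝ × ℝ => collapse Δ K p.1 p.2 := by
  refine Measurable.ite ?_ (Measurable.ite (measurableSet_le measurable_const
    (measurable_fst.add measurable_snd)) measurable_fst measurable_snd) measurable_const
  exact (measurableSet_le (measurable_fst.sub measurable_snd) measurable_const).inter
    ((measurableSet_le measurable_fst measurable_const).inter
      (measurableSet_le measurable_const measurable_snd))

lemma integrable_sq_midrange_cond {α : Type*} [MeasurableSpace α] {m : Measure α}
    {x lo hi : α → ℝ} (hlo : Measurable lo) (hhi : Measurable hi) (hlox : ∀ a, lo a ≤ x a)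
    (hxhi : ∀ a, x a ≤ hi a) (hx : ∀ᵐ a ∂m, x a ∈ Icc (-Δ) Δ) (K : ℝ) :
    Integrable (fun a => ((hi a + lo a) / 2) ^ 2) (m[|{a | hi a - lo a ≤ K}]) := by
  refine Integrable.of_bound (by fun_prop) ((Δ + K) ^ 2) ?_
  filter_upwards [cond_absolutelyContinuous.ae_le hx,
    ae_cond_mem (measurableSet_le (hhi.sub hlo) measurable_const)] with a hxa hacc
  rw [Real.norm_of_nonneg (sq_nonneg _)]
  exact sq_midrange_le (hlox a) (hxhi a) hacc hxa

section Transfer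

variable {γ δ : Type*} [MeasurableSpace γ] {μ : Measure ℝ} {ν : Measure γ} {H : Set ℝ}
  {T : γ → δ} {A : Set (ℝ × γ)} {B : Set (ℝ × δ)}

lemma ae_eq_preimage_prodMap (hμ : ∀ᵐ n ∂μ, n ∈ H)
    (hAB : ∀ p : ℝ × γ, p.1 ∈ H → (p ∈ A ↔ (p.1, T p.2) ∈ B)) :
    A =ᵐ[μ.prod ν] Prod.map id T ⁻¹' B := by
  filter_upwards [Measure.quasiMeasurePreserving_fst.ae hμ] with p hp
  exact propext (hAB p hp)

variable [MeasurableSpace δ] [SFinite μ] [SFinite ν]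

lemma prod_map_right (hT : Measurable T) : μ.prod (ν.map T) = (μ.prod ν).map (Prod.map id T) := by
  rw [← Measure.map_prod_map μ ν measurable_id hT, Measure.map_id]

lemma prod_map_apply_eq (hμ : ∀ᵐ n ∂μ, n ∈ H) (hT : Measurable T) (hB : MeasurableSet B)
    (hAB : ∀ p : ℝ × γ, p.1 ∈ H → (p ∈ A ↔ (p.1, T p.2) ∈ B)) :
    (μ.prod (ν.map T)) B = (μ.prod ν) A := by
  rw [prod_map_right hT, Measure.map_apply (measurable_id.prodMap hT) hB,
    measure_congr (ae_eq_preimage_prodMap hμ hAB)]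

lemma integral_cond_le_integral_cond_prod_map (hμ : ∀ᵐ n ∂μ, n ∈ H) (hT : Measurable T)
    (hA : MeasurableSet A) (hB : MeasurableSet B)
    (hAB : ∀ p : ℝ × γ, p.1 ∈ H → (p ∈ A ↔ (p.1, T p.2) ∈ B)) {f : ℝ × γ → ℝ} {g : ℝ × δ → ℝ}
    (hf : 0 ≤ f) (hg : Integrable g ((μ.prod (ν.map T))[|B]))
    (hfg : ∀ p ∈ A, p.1 ∈ H → f p ≤ g (p.1, T p.2)) :
    ∫ p, f p ∂(μ.prod ν)[|A] ≤ ∫ q, g q ∂(μ.prod (ν.map T))[|B] := by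
  rw [prod_map_right hT] at hg ⊢
  refine integral_cond_le_integral_cond_map (measurable_id.prodMap hT) hB
    (ae_eq_preimage_prodMap hμ hAB) (ae_of_all _ hf) hg ?_
  filter_upwards [ae_cond_mem hA, cond_absolutelyContinuous.ae_le
    (Measure.quasiMeasurePreserving_fst.ae hμ)] with p hpA hpH
  exact hfg p hpA hpH

end Transfer

lemma iInf_le_iSup_of_finite {ι : Type*} [Finite ι] (x : ι → ℝ) : ⨅ i, x i ≤ ⨆ i, x i := by
  cases isEmpty_or_nonempty ι
  · rw [Real.iInf_of_isEmpty, Real.iSup_of_isEmpty]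
  · exact ciInf_le_ciSup (Finite.bddBelow_range x) (Finite.bddAbove_range x)

def collapseMap {ι : Type*} (Δ K : ℝ) (x : ι → ℝ) : ℝ := collapse Δ K (⨆ i, x i) (⨅ i, x i)

lemma measurable_collapseMap {ι : Type*} [Countable ι] :
    Measurable (collapseMap (ι := ι) Δ K) :=
  measurable_collapse.comp
    ((Measurable.iSup measurable_pi_apply).prodMk (Measurable.iInf measurable_pi_apply))

lemma measurable_iSup_snd {ι : Type*} [Countable ι] :
    Measurable fun p : ℝ × (ι → ℝ) => ⨆ i, p.2 i :=
  Measurable.iSup fun i => (measurable_pi_apply i).comp measurable_snd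

lemma measurable_iInf_snd {ι : Type*} [Countable ι] :
    Measurable fun p : ℝ × (ι → ℝ) => ⨅ i, p.2 i :=
  Measurable.iInf fun i => (measurable_pi_apply i).comp measurable_snd

section Model

variable {η : ℝ} {μ : Measure ℝ} {N : ℕ}

lemma measurableSet_acc2 : MeasurableSet (acc2 η Δ) :=
  measurableSet_le (by fun_prop) measurable_const

lemma measurableSet_accN : MeasurableSet (accN N η Δ) :=
  measurableSet_le ((measurable_fst.max measurable_iSup_snd).sub
    (measurable_fst.min measurable_iInf_snd)) measurable_const

lemma integrable_sq_mid2_cond (hμ : ∀ᵐ n ∂μ, n ∈ Icc (-Δ) Δ) (κ : Measure ℝ) :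
    Integrable (fun p => mid2 p ^ 2) ((μ.prod κ)[|acc2 η Δ]) :=
  integrable_sq_midrange_cond (x := Prod.fst) (lo := fun p => min p.1 p.2)
    (hi := fun p => max p.1 p.2) (by fun_prop) (by fun_prop) (fun _ => min_le_left _ _)
    (fun _ => le_max_left _ _) (Measure.quasiMeasurePreserving_fst.ae hμ) (η * Δ)

lemma integrable_sq_midN_cond (hμ : ∀ᵐ n ∂μ, n ∈ Icc (-Δ) Δ) (ν : Measure (Fin (N - 1) → ℝ)) :
    Integrable (fun p => midN N p ^ 2) ((μ.prod ν)[|accN N η Δ]) :=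
  integrable_sq_midrange_cond (x := Prod.fst)
    (lo := fun p : ℝ × (Fin (N - 1) → ℝ) => min p.1 (⨅ i, p.2 i))
    (hi := fun p : ℝ × (Fin (N - 1) → ℝ) => max p.1 (⨆ i, p.2 i))
    (measurable_fst.min measurable_iInf_snd) (measurable_fst.max measurable_iSup_snd)
    (fun _ => min_le_left _ _) (fun _ => le_max_left _ _)
    (Measure.quasiMeasurePreserving_fst.ae hμ) (η * Δ)

variable [SFinite μ]

lemma exists_PA_2_eq_MSE_N_le (hK : 2 * Δ ≤ η * Δ) (hμ : ∀ᵐ n ∂μ, n ∈ Icc (-Δ) Δ)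
    (ν : Measure (Fin (N - 1) → ℝ)) [IsProbabilityMeasure ν] :
    ∃ κ : Measure ℝ, IsProbabilityMeasure κ ∧
      PA_2 η Δ μ κ = PA_N N η Δ μ ν ∧ MSE_N N η Δ μ ν ≤ MSE_2 η Δ μ κ := by
  have hT : Measurable (collapseMap (ι := Fin (N - 1)) Δ (η * Δ)) := measurable_collapseMap
  have hAB : ∀ p : ℝ × (Fin (N - 1) → ℝ), p.1 ∈ Icc (-Δ) Δ →
      (p ∈ accN N η Δ ↔ (p.1, collapseMap Δ (η * Δ) p.2) ∈ acc2 η Δ) := fun p hp =>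
    (max_sub_min_collapse_le_iff hK (iInf_le_iSup_of_finite p.2) hp).symm
  refine ⟨ν.map (collapseMap Δ (η * Δ)), Measure.isProbabilityMeasure_map hT.aemeasurable, ?_, ?_⟩
  · rw [PA_2, PA_N, prod_map_apply_eq hμ hT measurableSet_acc2 hAB]
  · exact integral_cond_le_integral_cond_prod_map hμ hT measurableSet_accN measurableSet_acc2 hAB
      (fun _ => sq_nonneg _) (integrable_sq_mid2_cond hμ _)
      (fun p hpA hpH => sq_midrange_le_collapse (iInf_le_iSup_of_finite p.2) hpH hpA)

lemma exists_PA_N_eq_MSE_2_le [Nonempty (Fin (N - 1))] (hμ : ∀ᵐ n ∂μ, n ∈ Icc (-Δ) Δ)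
    (κ : Measure ℝ) [IsProbabilityMeasure κ] :
    ∃ ν : Measure (Fin (N - 1) → ℝ), IsProbabilityMeasure ν ∧
      PA_N N η Δ μ ν = PA_2 η Δ μ κ ∧ MSE_2 η Δ μ κ ≤ MSE_N N η Δ μ ν := by
  have hT : Measurable fun t : ℝ => fun _ : Fin (N - 1) => t := by fun_prop
  have hAB : ∀ p : ℝ × ℝ, p.1 ∈ univ → (p ∈ acc2 η Δ ↔ (p.1, fun _ => p.2) ∈ accN N η Δ) :=
    fun p _ => by simp only [acc2, accN, mem_ofPred_eq, ciSup_const, ciInf_const]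
  refine ⟨κ.map fun t _ => t, Measure.isProbabilityMeasure_map hT.aemeasurable, ?_, ?_⟩
  · rw [PA_2, PA_N, prod_map_apply_eq (ae_of_all _ mem_univ) hT measurableSet_accN hAB]
  · refine integral_cond_le_integral_cond_prod_map (ae_of_all _ mem_univ) hT measurableSet_acc2
      measurableSet_accN hAB (fun _ => sq_nonneg _) (integrable_sq_midN_cond hμ _) ?_
    intro p _ _
    simp only [mid2, midN, ciSup_const, ciInf_const, le_refl]

end Model

end MidrangeFilter

open MidrangeFilter

theorem stmt7 {η Δ : ℝ} (hΔ : 0 < Δ) (hη : 2 ≤ η)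
    (μ : Measure ℝ) [IsProbabilityMeasure μ] (hμ : μ (Set.Icc (-Δ) Δ) = 1) :
    ∀ N : ℕ, 2 ≤ N → ∀ α : ℝ, 0 < α → α ≤ 1 → cN N η Δ μ α = c2 η Δ μ α := by
  intro N hN α _ _
  have hK : 2 * Δ ≤ η * Δ := by nlinarith
  have hμ' : ∀ᵐ n ∂μ, n ∈ Set.Icc (-Δ) Δ :=
    (ae_mem_iff_measure_eq measurableSet_Icc.nullMeasurableSet).2 (by rw [hμ, measure_univ])
  have : Nonempty (Fin (N - 1)) := Fin.pos_iff_nonempty.1 (by omega)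
  apply csSup_eq_csSup_of_forall_exists_le
  · rintro _ ⟨ν, hν, hα, rfl⟩
    obtain ⟨κ, hκ, hPA, hMSE⟩ := exists_PA_2_eq_MSE_N_le hK hμ' ν
    exact ⟨_, ⟨κ, hκ, hPA ▸ hα, rfl⟩, hMSE⟩
  · rintro _ ⟨κ, hκ, hα, rfl⟩
    obtain ⟨ν, hν, hPA, hMSE⟩ := exists_PA_N_eq_MSE_2_le (N := N) hμ' κ
    exact ⟨_, ⟨ν, hν, hPA ▸ hα, rfl⟩, hMSE⟩
end
end
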